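/- Converse Beck–Chevalley swap: if for every P in the fiber over the domain of g there is a cocartesian lift of g with domain P which is stable along k, then every Π-diagram over k is stable along g. -/

import Mathlib

/-!
Let `(q, ε')` be the restriction of a `Π`-diagram `(c, ε)` over `k` along the pullback square
`f ≫ g = h ≫ k`, and test the universal property of `(q, ε')` against a cartesian `c'' : X'' ⟶ Y''`
over `f` and a vertical `u`. Push `Y''` forward along `g` by the stable cocartesian lift
`t : Y'' ⟶ Z` and pull `Z` back along `k` to `cZ : Z' ⟶ Z`; stability makes the comparison
`m : X'' ⟶ Z'` cocartesian over `h`. Vertical maps `Y'' ⟶ Y'` and `Z ⟶ Y` both correspond to maps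
`Y'' ⟶ Y` over `g`, and vertical maps `X'' ⟶ X'` and `Z' ⟶ X` both correspond to maps `X'' ⟶ X` over
`h`. These bijections turn the universal problem of `(q, ε')` at `(c'', u)` into that of `(c, ε)` at
`(cZ, r)`, where `r` is the vertical map with `m ≫ r = u ≫ cP`.
-/

open CategoryTheory CategoryTheory.Limits CategoryTheory.Functor

namespace FOHL

variable {𝒮 : Type*} {𝒳 : Type*} [Category 𝒮] [Category 𝒳]

variable (p : 𝒳 ⥤ 𝒮)

/-- A binary product diagram in the fiber of `p` over `S`. -/
structure IsFiberProductFan (S : 𝒮) {P Q T : 𝒳} (π₁ : T ⟶ P) (π₂ : T ⟶ Q) : Prop where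
  lift₁ : p.IsHomLift (𝟙 S) π₁
  lift₂ : p.IsHomLift (𝟙 S) π₂
  universal : ∀ {X : 𝒳} (u : X ⟶ P) (v : X ⟶ Q),
    p.IsHomLift (𝟙 S) u → p.IsHomLift (𝟙 S) v →
      ∃! w : X ⟶ T, p.IsHomLift (𝟙 S) w ∧ w ≫ π₁ = u ∧ w ≫ π₂ = v

/-- A binary coproduct diagram in the fiber of `p` over `S`. -/
structure IsFiberCoproductCofan (S : 𝒮) {P Q T : 𝒳} (ι₁ : P ⟶ T) (ι₂ : Q ⟶ T) : Prop where
  lift₁ : p.IsHomLift (𝟙 S) ι₁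
  lift₂ : p.IsHomLift (𝟙 S) ι₂
  universal : ∀ {X : 𝒳} (u : P ⟶ X) (v : Q ⟶ X),
    p.IsHomLift (𝟙 S) u → p.IsHomLift (𝟙 S) v →
      ∃! w : T ⟶ X, p.IsHomLift (𝟙 S) w ∧ ι₁ ≫ w = u ∧ ι₂ ≫ w = v

/-- A terminal object of the fiber of `p` over `S`. -/
structure IsFiberTerminal (S : 𝒮) (T : 𝒳) : Prop where
  obj_over : p.obj T = S
  universal : ∀ X : 𝒳, p.obj X = S → ∃! u : X ⟶ T, p.IsHomLift (𝟙 S) u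

/-- An initial object of the fiber of `p` over `S`. -/
structure IsFiberInitial (S : 𝒮) (T : 𝒳) : Prop where
  obj_over : p.obj T = S
  universal : ∀ X : 𝒳, p.obj X = S → ∃! u : T ⟶ X, p.IsHomLift (𝟙 S) u

/-- An exponential diagram in the fiber of `p` over `S`: `E` is the exponential `P ⟹ Q`,
`π₁ : W ⟶ E`, `π₂ : W ⟶ P` is a product fan exhibiting `W = E ∧ P`, and `ev : W ⟶ Q` is the
evaluation morphism. -/
structure IsFiberExponential (S : 𝒮) {P Q E W : 𝒳}
    (π₁ : W ⟶ E) (π₂ : W ⟶ P) (ev : W ⟶ Q) : Prop where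
  fan : IsFiberProductFan p S π₁ π₂
  ev_lift : p.IsHomLift (𝟙 S) ev
  universal : ∀ {X V : 𝒳} (ρ₁ : V ⟶ X) (ρ₂ : V ⟶ P), IsFiberProductFan p S ρ₁ ρ₂ →
    ∀ g : V ⟶ Q, p.IsHomLift (𝟙 S) g →
      ∃! h : X ⟶ E, p.IsHomLift (𝟙 S) h ∧
        ∀ m : V ⟶ W, p.IsHomLift (𝟙 S) m → m ≫ π₁ = ρ₁ ≫ h → m ≫ π₂ = ρ₂ →
          m ≫ ev = g

/-- Stability of fiberwise binary product diagrams under pullback along `f`. -/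
def ProductsStableAlong {R S : 𝒮} (f : R ⟶ S) : Prop :=
  ∀ {P Q T P' Q' T' : 𝒳} (π₁ : T ⟶ P) (π₂ : T ⟶ Q)
    (π₁' : T' ⟶ P') (π₂' : T' ⟶ Q') (cP : P' ⟶ P) (cQ : Q' ⟶ Q) (cT : T' ⟶ T),
    IsFiberProductFan p S π₁ π₂ →
    p.IsStronglyCartesian f cP → p.IsStronglyCartesian f cQ → p.IsStronglyCartesian f cT →
    p.IsHomLift (𝟙 R) π₁' → p.IsHomLift (𝟙 R) π₂' →
    π₁' ≫ cP = cT ≫ π₁ → π₂' ≫ cQ = cT ≫ π₂ →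
    IsFiberProductFan p R π₁' π₂'

/-- Stability of fiberwise binary coproduct diagrams under pullback along `f`. -/
def CoproductsStableAlong {R S : 𝒮} (f : R ⟶ S) : Prop :=
  ∀ {P Q T P' Q' T' : 𝒳} (ι₁ : P ⟶ T) (ι₂ : Q ⟶ T)
    (ι₁' : P' ⟶ T') (ι₂' : Q' ⟶ T') (cP : P' ⟶ P) (cQ : Q' ⟶ Q) (cT : T' ⟶ T),
    IsFiberCoproductCofan p S ι₁ ι₂ →
    p.IsStronglyCartesian f cP → p.IsStronglyCartesian f cQ → p.IsStronglyCartesian f cT →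
    p.IsHomLift (𝟙 R) ι₁' → p.IsHomLift (𝟙 R) ι₂' →
    ι₁' ≫ cT = cP ≫ ι₁ → ι₂' ≫ cT = cQ ≫ ι₂ →
    IsFiberCoproductCofan p R ι₁' ι₂'

/-- Stability of fiberwise exponential diagrams under pullback along `f`. -/
def ExponentialsStableAlong {R S : 𝒮} (f : R ⟶ S) : Prop :=
  ∀ {P Q E W P' Q' E' W' : 𝒳} (π₁ : W ⟶ E) (π₂ : W ⟶ P) (ev : W ⟶ Q)
    (π₁' : W' ⟶ E') (π₂' : W' ⟶ P') (ev' : W' ⟶ Q')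
    (cE : E' ⟶ E) (cP : P' ⟶ P) (cQ : Q' ⟶ Q) (cW : W' ⟶ W),
    IsFiberExponential p S π₁ π₂ ev →
    p.IsStronglyCartesian f cE → p.IsStronglyCartesian f cP →
    p.IsStronglyCartesian f cQ → p.IsStronglyCartesian f cW →
    p.IsHomLift (𝟙 R) π₁' → p.IsHomLift (𝟙 R) π₂' → p.IsHomLift (𝟙 R) ev' →
    π₁' ≫ cE = cW ≫ π₁ → π₂' ≫ cP = cW ≫ π₂ → ev' ≫ cQ = cW ≫ ev →
    IsFiberExponential p R π₁' π₂' ev'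

/-- A `Π`-diagram over `f : R ⟶ S` based on `P` (with `P` in the fiber over `R`): a cartesian
morphism `c : X ⟶ Y` over `f` (so `X = f*Y`, `Y = Π_f P`) and a vertical evaluation morphism
`ε : X ⟶ P` which is universal: for every cartesian `c' : X' ⟶ Y'` over `f` and vertical
`u : X' ⟶ P` there is a unique vertical `v : Y' ⟶ Y` whose pullback composed with `ε` is `u`. -/
structure IsPiDiagram {R S : 𝒮} (f : R ⟶ S) {P X Y : 𝒳} (c : X ⟶ Y) (ε : X ⟶ P) : Prop where
  cart : p.IsStronglyCartesian f c
  vert : p.IsHomLift (𝟙 R) ε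
  universal : ∀ {X' Y' : 𝒳} (c' : X' ⟶ Y'), p.IsStronglyCartesian f c' →
    ∀ u : X' ⟶ P, p.IsHomLift (𝟙 R) u →
      ∃! v : Y' ⟶ Y, p.IsHomLift (𝟙 S) v ∧
        ∀ w : X' ⟶ X, p.IsHomLift (𝟙 R) w → w ≫ c = c' ≫ v → w ≫ ε = u

/-- The Beck–Chevalley condition: stability of a `Π`-diagram over `g : Cc ⟶ D` along
`k : Bb ⟶ D`.  For every pullback square and every pullback of the diagram along the square,
the resulting diagram is again a `Π`-diagram. -/
def PiDiagramStableAlong {Cc D : 𝒮} (g : Cc ⟶ D) {P X Y : 𝒳} (c : X ⟶ Y) (ε : X ⟶ P)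
    {Bb : 𝒮} (k : Bb ⟶ D) : Prop :=
  ∀ {A : 𝒮} (f : A ⟶ Bb) (h : A ⟶ Cc), IsPullback f h k g →
    ∀ {P' X' Y' : 𝒳} (cP : P' ⟶ P) (cX : X' ⟶ X) (cY : Y' ⟶ Y)
      (q : X' ⟶ Y') (ε' : X' ⟶ P'),
      p.IsStronglyCartesian h cP → p.IsStronglyCartesian h cX → p.IsStronglyCartesian k cY →
      p.IsHomLift f q → q ≫ cY = cX ≫ c →
      p.IsHomLift (𝟙 A) ε' → ε' ≫ cP = cX ≫ ε →
      IsPiDiagram p f q ε'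

/-- Stability of a cocartesian lift `t : P ⟶ Z` of `g : Cc ⟶ D` along `k : Bb ⟶ D`:
for every pullback square, the induced comparison morphism between the pullbacks is again
cocartesian. -/
def CocartesianStableAlong {Cc D : 𝒮} (g : Cc ⟶ D) {P Z : 𝒳} (t : P ⟶ Z)
    {Bb : 𝒮} (k : Bb ⟶ D) : Prop :=
  ∀ {A : 𝒮} (f : A ⟶ Bb) (h : A ⟶ Cc), IsPullback f h k g →
    ∀ {P' Z' : 𝒳} (cP : P' ⟶ P) (cZ : Z' ⟶ Z) (m : P' ⟶ Z'),
      p.IsStronglyCartesian h cP → p.IsStronglyCartesian k cZ →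
      p.IsHomLift f m → m ≫ cZ = cP ≫ t →
      p.IsStronglyCocartesian f m

end FOHL

open CategoryTheory CategoryTheory.Functor FOHL

namespace CategoryTheory.Functor

variable {𝒮 𝒳 : Type*} [Category 𝒮] [Category 𝒳] (p : 𝒳 ⥤ 𝒮) {R S : 𝒮} {a b : 𝒳}

namespace IsStronglyCartesian

lemma cancel_mono (f : R ⟶ S) (φ : a ⟶ b) [p.IsStronglyCartesian f φ] {R' : 𝒮} {a' : 𝒳}
    (g : R' ⟶ R) {ψ ψ' : a' ⟶ a} [p.IsHomLift g ψ] [p.IsHomLift g ψ'] :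
    ψ ≫ φ = ψ' ≫ φ ↔ ψ = ψ' :=
  ⟨IsStronglyCartesian.ext p f φ g, fun h ↦ h ▸ rfl⟩

noncomputable def verticalHomEquiv (f : R ⟶ S) (φ : a ⟶ b) [p.IsStronglyCartesian f φ]
    (a' : 𝒳) : {χ : a' ⟶ a // p.IsHomLift (𝟙 R) χ} ≃ {φ' : a' ⟶ b // p.IsHomLift f φ'} where
  toFun χ := ⟨χ.1 ≫ φ, by have := χ.2; infer_instance⟩
  invFun φ' := have := φ'.2; ⟨map p f φ (f' := f) (Category.id_comp f).symm φ'.1, inferInstance⟩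
  left_inv χ := have := χ.2
    Subtype.ext (map_uniq p f φ (f' := f) (Category.id_comp f).symm _ χ.1 rfl).symm
  right_inv φ' := have := φ'.2; Subtype.ext (fac p f φ (f' := f) (Category.id_comp f).symm φ'.1)

lemma of_comp_eq_comp {T S' : 𝒮} {c b' : 𝒳} {f : R ⟶ S} {g : S ⟶ T} {f' : R ⟶ S'}
    {g' : S' ⟶ T} (hfg : f ≫ g = f' ≫ g') {φ : a ⟶ b} {ψ : b ⟶ c} {φ' : a ⟶ b'} {ψ' : b' ⟶ c}
    [p.IsHomLift f φ] [p.IsStronglyCartesian g ψ] [p.IsStronglyCartesian f' φ']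
    [p.IsStronglyCartesian g' ψ'] (h : φ ≫ ψ = φ' ≫ ψ') : p.IsStronglyCartesian f φ := by
  have : p.IsStronglyCartesian (f ≫ g) (φ ≫ ψ) := by rw [h, hfg]; infer_instance
  exact IsStronglyCartesian.of_comp p (g := g) (ψ := ψ)

end IsStronglyCartesian

namespace IsStronglyCocartesian

lemma cancel_epi (f : R ⟶ S) (φ : a ⟶ b) [p.IsStronglyCocartesian f φ] {S' : 𝒮} {b' : 𝒳}
    (g : S ⟶ S') {ψ ψ' : b ⟶ b'} [p.IsHomLift g ψ] [p.IsHomLift g ψ'] :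
    φ ≫ ψ = φ ≫ ψ' ↔ ψ = ψ' :=
  ⟨IsStronglyCocartesian.ext p f φ g, fun h ↦ h ▸ rfl⟩

noncomputable def verticalHomEquiv (f : R ⟶ S) (φ : a ⟶ b) [p.IsStronglyCocartesian f φ]
    (b' : 𝒳) : {χ : b ⟶ b' // p.IsHomLift (𝟙 S) χ} ≃ {φ' : a ⟶ b' // p.IsHomLift f φ'} where
  toFun χ := ⟨φ ≫ χ.1, by have := χ.2; infer_instance⟩
  invFun φ' := have := φ'.2; ⟨map p f φ (f' := f) (Category.comp_id f).symm φ'.1, inferInstance⟩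
  left_inv χ := have := χ.2
    Subtype.ext (map_uniq p f φ (f' := f) (Category.comp_id f).symm _ χ.1 rfl).symm
  right_inv φ' := have := φ'.2; Subtype.ext (fac p f φ (f' := f) (Category.comp_id f).symm φ'.1)

end IsStronglyCocartesian

end CategoryTheory.Functor

namespace FOHL

section Restriction

variable {𝒮 𝒳 : Type*} [Category 𝒮] [Category 𝒳] (p : 𝒳 ⥤ 𝒮)
  {A B₀ C₀ D : 𝒮} (f : A ⟶ C₀) (g : C₀ ⟶ D) (h : A ⟶ B₀) (k : B₀ ⟶ D)
  {Q X Y P' X' Y' X'' Y'' Z Z' : 𝒳} {c : X ⟶ Y} {ε : X ⟶ Q}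
  {cP : P' ⟶ Q} {cX : X' ⟶ X} {cY : Y' ⟶ Y} {q : X' ⟶ Y'} {ε' : X' ⟶ P'}
  {c'' : X'' ⟶ Y''} {u : X'' ⟶ P'} {t : Y'' ⟶ Z} {cZ : Z' ⟶ Z} {m : X'' ⟶ Z'} {r : Z' ⟶ Q}

lemma restrict_comm_iff [p.IsHomLift k c] [p.IsStronglyCartesian g cY] [p.IsHomLift f q]
    [p.IsHomLift f c''] [p.IsHomLift k cZ] [p.IsStronglyCocartesian h m]
    (hq : q ≫ cY = cX ≫ c) (hm : m ≫ cZ = c'' ≫ t)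
    {w : X'' ⟶ X'} {w₁ : Z' ⟶ X} {v : Y'' ⟶ Y'} {s : Z ⟶ Y} [p.IsHomLift (𝟙 A) w]
    [p.IsHomLift (𝟙 B₀) w₁] [p.IsHomLift (𝟙 C₀) v] [p.IsHomLift (𝟙 D) s]
    (hw : m ≫ w₁ = w ≫ cX) (hv : v ≫ cY = t ≫ s) :
    w ≫ q = c'' ≫ v ↔ w₁ ≫ c = cZ ≫ s :=
  calc w ≫ q = c'' ≫ v ↔ (w ≫ q) ≫ cY = (c'' ≫ v) ≫ cY :=
        (IsStronglyCartesian.cancel_mono p g cY f).symm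
    _ ↔ m ≫ w₁ ≫ c = m ≫ cZ ≫ s := by
        simp only [Category.assoc, hq, hv, reassoc_of% hw, reassoc_of% hm]
    _ ↔ w₁ ≫ c = cZ ≫ s := IsStronglyCocartesian.cancel_epi p h m k

lemma restrict_eval_iff [p.IsHomLift (𝟙 B₀) ε] [p.IsStronglyCartesian h cP]
    [p.IsHomLift (𝟙 A) ε'] [p.IsHomLift (𝟙 A) u] [p.IsStronglyCocartesian h m]
    [p.IsHomLift (𝟙 B₀) r] (hε : ε' ≫ cP = cX ≫ ε) (hr : m ≫ r = u ≫ cP)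
    {w : X'' ⟶ X'} {w₁ : Z' ⟶ X} [p.IsHomLift (𝟙 A) w] [p.IsHomLift (𝟙 B₀) w₁]
    (hw : m ≫ w₁ = w ≫ cX) :
    w ≫ ε' = u ↔ w₁ ≫ ε = r :=
  calc w ≫ ε' = u ↔ (w ≫ ε') ≫ cP = u ≫ cP :=
        (IsStronglyCartesian.cancel_mono p h cP (𝟙 A)).symm
    _ ↔ m ≫ w₁ ≫ ε = m ≫ r := by
        simp only [Category.assoc, hε, hr, reassoc_of% hw]
    _ ↔ w₁ ≫ ε = r := IsStronglyCocartesian.cancel_epi p h m (𝟙 B₀)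

lemma existsUnique_restrict_iff [p.IsHomLift k c] [p.IsHomLift (𝟙 B₀) ε]
    [p.IsStronglyCartesian h cP] [p.IsStronglyCartesian h cX] [p.IsStronglyCartesian g cY]
    [p.IsHomLift f q] [p.IsHomLift (𝟙 A) ε'] [p.IsHomLift f c''] [p.IsHomLift (𝟙 A) u]
    [p.IsStronglyCocartesian g t] [p.IsHomLift k cZ] [p.IsStronglyCocartesian h m]
    [p.IsHomLift (𝟙 B₀) r] (hq : q ≫ cY = cX ≫ c) (hε : ε' ≫ cP = cX ≫ ε)
    (hm : m ≫ cZ = c'' ≫ t) (hr : m ≫ r = u ≫ cP) :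
    (∃! v : Y'' ⟶ Y', p.IsHomLift (𝟙 C₀) v ∧
      ∀ w : X'' ⟶ X', p.IsHomLift (𝟙 A) w → w ≫ q = c'' ≫ v → w ≫ ε' = u) ↔
    ∃! s : Z ⟶ Y, p.IsHomLift (𝟙 D) s ∧
      ∀ w₁ : Z' ⟶ X, p.IsHomLift (𝟙 B₀) w₁ → w₁ ≫ c = cZ ≫ s → w₁ ≫ ε = r := by
  let eX := (IsStronglyCartesian.verticalHomEquiv p h cX X'').trans
    (IsStronglyCocartesian.verticalHomEquiv p h m X).symm
  let eY := (IsStronglyCartesian.verticalHomEquiv p g cY Y'').trans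
    (IsStronglyCocartesian.verticalHomEquiv p g t Y).symm
  have heX (w) : m ≫ (eX w).1 = w.1 ≫ cX := congrArg Subtype.val
    ((IsStronglyCocartesian.verticalHomEquiv p h m X).apply_symm_apply
      (IsStronglyCartesian.verticalHomEquiv p h cX X'' w))
  have heY (v) : v.1 ≫ cY = t ≫ (eY v).1 := (congrArg Subtype.val
    ((IsStronglyCocartesian.verticalHomEquiv p g t Y).apply_symm_apply
      (IsStronglyCartesian.verticalHomEquiv p g cY Y'' v))).symm
  refine (Equiv.subtypeSubtypeEquivSubtypeInter _ _).symm.existsUnique_subtype_congr.trans <|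
    (eY.existsUnique_congr fun v ↦ ?_).trans
      (Equiv.subtypeSubtypeEquivSubtypeInter _ _).existsUnique_subtype_congr
  have := v.2
  have := (eY v).2
  refine Subtype.forall'.trans <| (eX.forall_congr fun w ↦ ?_).trans Subtype.forall'.symm
  have := w.2
  have := (eX w).2
  exact imp_congr (restrict_comm_iff p f g h k hq hm (heX w) (heY v))
    (restrict_eval_iff p h hε hr (heX w))

end Restriction

end FOHL

/-- converse Beck–Chevalley swap. Let `p : 𝒳 ⥤ 𝒮` be a fibration and
`g : C₀ ⟶ D`, `k : B₀ ⟶ D` morphisms of `𝒮`.  If for every `P` in the fiber over `C₀` there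
is a cocartesian lift of `g` with domain `P` which is stable along `k`, then every
`Π`-diagram over `k` is stable along `g`. -/
theorem pi_stable_of_cocartesian_stable
    {𝒮 𝒳 : Type*} [Category 𝒮] [Category 𝒳] (p : 𝒳 ⥤ 𝒮) [p.IsFibered]
    {B₀ C₀ D : 𝒮} (g : C₀ ⟶ D) (k : B₀ ⟶ D)
    (hcocart : ∀ P : 𝒳, p.obj P = C₀ → ∃ (Z : 𝒳) (t : P ⟶ Z),
      p.IsStronglyCocartesian g t ∧ CocartesianStableAlong p g t k) :
    ∀ {Q X Y : 𝒳} (c : X ⟶ Y) (ε : X ⟶ Q), IsPiDiagram p k c ε →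
      PiDiagramStableAlong p k c ε g := by
  intro Q X Y c ε hPi A f h hpb P' X' Y' cP cX cY q ε' hcP hcX hcY hq hcomm hε' hε
  have := hPi.cart
  have := hPi.vert
  refine ⟨IsStronglyCartesian.of_comp_eq_comp p hpb.w hcomm, hε', fun {X'' Y''} c'' hc'' u hu ↦ ?_⟩
  obtain ⟨Z, t, ht, hstab⟩ := hcocart Y'' (IsHomLift.codomain_eq p f c'')
  obtain ⟨Z', cZ, hcZ⟩ := IsPreFibered.exists_isCartesian p (IsHomLift.codomain_eq p g t) k
  have : p.IsHomLift (h ≫ k) (c'' ≫ t) := hpb.w ▸ inferInstance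
  let m : X'' ⟶ Z' := IsStronglyCartesian.map p k cZ (f' := h ≫ k) rfl (c'' ≫ t)
  have hm : m ≫ cZ = c'' ≫ t := IsStronglyCartesian.fac p k cZ rfl (c'' ≫ t)
  have hmcocart := hstab h f hpb.flip c'' cZ m hc'' inferInstance inferInstance hm
  let r : Z' ⟶ Q := IsStronglyCocartesian.map p h m (Category.comp_id h).symm (u ≫ cP)
  have hr : m ≫ r = u ≫ cP := IsStronglyCocartesian.fac p h m (Category.comp_id h).symm (u ≫ cP)
  exact (existsUnique_restrict_iff p f g h k hcomm hε hm hr).mpr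
    (hPi.universal cZ inferInstance r inferInstance)
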